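/- arXiv:1403.5704 — 3 statements merged into one kernel-verified Lean document; each statement's English description precedes it below -/
import Mathlib

section
/- Let H₁ and H₂ be Hermitian n×n complex matrices with H₁ ≤ H₂. If H₁ and H₂ have the same number of negative eigenvalues and the same number of zero eigenvalues, then ker H₁ = ker H₂. -/
open Matrix ComplexOrder

/-- Number of strictly negative eigenvalues (with multiplicity) of a matrix,
interpreted via its Hermitian spectral decomposition (0 if not Hermitian). -/
noncomputable def negCount {n : ℕ} (A : Matrix (Fin n) (Fin n) ℂ) : ℕ :=
  if h : A.IsHermitian then Fintype.card {i // h.eigenvalues i < 0} else 0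

/-- Number of strictly positive eigenvalues. -/
noncomputable def posCount {n : ℕ} (A : Matrix (Fin n) (Fin n) ℂ) : ℕ :=
  if h : A.IsHermitian then Fintype.card {i // 0 < h.eigenvalues i} else 0

/-- Number of nonpositive eigenvalues. -/
noncomputable def nonposCount {n : ℕ} (A : Matrix (Fin n) (Fin n) ℂ) : ℕ :=
  if h : A.IsHermitian then Fintype.card {i // h.eigenvalues i ≤ 0} else 0

/-- Number of nonnegative eigenvalues. -/
noncomputable def nonnegCount {n : ℕ} (A : Matrix (Fin n) (Fin n) ℂ) : ℕ :=
  if h : A.IsHermitian then Fintype.card {i // 0 ≤ h.eigenvalues i} else 0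

/-- Number of zero eigenvalues. -/
noncomputable def zeroCount {n : ℕ} (A : Matrix (Fin n) (Fin n) ℂ) : ℕ :=
  if h : A.IsHermitian then Fintype.card {i // h.eigenvalues i = 0} else 0

/-!
Let `W` be the span of the eigenvectors of `H₂` with eigenvalue `≤ 0` and `N` the span of
those of `H₁` with eigenvalue `≥ 0`. For `u ∈ W ⊓ N` we get `0 ≤ ⟪H₁ u, u⟫ ≤ ⟪H₂ u, u⟫ ≤ 0`,
and a vector of a semidefinite spectral subspace on which the quadratic form vanishes lies in
the kernel, so `W ⊓ N ≤ ker H₁ ⊓ ker H₂`. With `k` negative and `z` zero eigenvalues for both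
matrices, `dim (W ⊓ N) ≥ (k + z) + (n - k) - n = z = dim ker Hᵢ`, hence both kernels equal
`W ⊓ N`.
-/

open Module RCLike
open scoped InnerProductSpace

theorem Submodule.finrank_add_finrank_le_finrank_add_finrank_inf {K V : Type*} [DivisionRing K]
    [AddCommGroup V] [Module K V] [FiniteDimensional K V] (s t : Submodule K V) :
    finrank K s + finrank K t ≤ finrank K V + finrank K ↥(s ⊓ t) :=
  Submodule.finrank_sup_add_finrank_inf_eq s t ▸ Nat.add_le_add_right (Submodule.finrank_le _) _

section Counting

variable {ι α : Type*} [Fintype ι] [LinearOrder α] (f : ι → α) (a : α)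

theorem Fintype.card_subtype_le_eq_card_lt_add_card_eq :
    Fintype.card {i // f i ≤ a} = Fintype.card {i // f i < a} + Fintype.card {i // f i = a} := by
  classical
  simp only [Fintype.card_subtype]
  rw [← Finset.card_union_of_disjoint (Finset.disjoint_filter.2 fun _ _ h => h.ne),
    ← Finset.filter_or]
  simp only [le_iff_lt_or_eq]

theorem Fintype.card_subtype_lt_add_card_le :
    Fintype.card {i // f i < a} + Fintype.card {i // a ≤ f i} = Fintype.card ι := by
  simp only [Fintype.card_subtype, ← not_lt]
  rw [Finset.card_filter_add_card_filter_not, Finset.card_univ]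

end Counting

namespace Matrix

variable {𝕜 ι : Type*} [RCLike 𝕜] [Fintype ι] [DecidableEq ι] {A : Matrix ι ι 𝕜}

theorem re_inner_toEuclideanLin_le_of_posSemidef_sub {B : Matrix ι ι 𝕜}
    (hle : (B - A).PosSemidef) (u : EuclideanSpace 𝕜 ι) :
    re ⟪toEuclideanLin A u, u⟫_𝕜 ≤ re ⟪toEuclideanLin B u, u⟫_𝕜 := by
  have := (isPositive_toEuclideanLin_iff.mpr hle).re_inner_nonneg_left u
  rw [map_sub, LinearMap.sub_apply, inner_sub_left, map_sub] at this
  linarith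

namespace IsHermitian

variable (hA : A.IsHermitian)

noncomputable def spectralSubspace (p : ℝ → Prop) : Submodule 𝕜 (EuclideanSpace 𝕜 ι) :=
  Submodule.span 𝕜 (hA.eigenvectorBasis '' {i | p (hA.eigenvalues i)})

theorem mem_spectralSubspace_iff {p : ℝ → Prop} {u : EuclideanSpace 𝕜 ι} :
    u ∈ hA.spectralSubspace p ↔
      ∀ i, ¬ p (hA.eigenvalues i) → hA.eigenvectorBasis.repr u i = 0 := by
  rw [spectralSubspace, ← hA.eigenvectorBasis.coe_toBasis, Basis.mem_span_image]
  simp [Set.subset_def, not_imp_comm]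

theorem finrank_spectralSubspace (p : ℝ → Prop) [DecidablePred p] :
    finrank 𝕜 (hA.spectralSubspace p) = Fintype.card {i // p (hA.eigenvalues i)} := by
  rw [spectralSubspace, Set.image_eq_range]
  exact finrank_span_eq_card
    (hA.eigenvectorBasis.orthonormal.linearIndependent.comp _ Subtype.val_injective)

theorem toEuclideanLin_eigenvectorBasis (i : ι) :
    toEuclideanLin A (hA.eigenvectorBasis i) =
      (hA.eigenvalues i : 𝕜) • hA.eigenvectorBasis i := by
  rw [toLpLin_apply, hA.mulVec_eigenvectorBasis, RCLike.real_smul_eq_coe_smul (K := 𝕜)]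
  rfl

theorem eigenvectorBasis_repr_toEuclideanLin (u : EuclideanSpace 𝕜 ι) (i : ι) :
    hA.eigenvectorBasis.repr (toEuclideanLin A u) i =
      hA.eigenvalues i * hA.eigenvectorBasis.repr u i := by
  simp only [OrthonormalBasis.repr_apply_apply]
  rw [← isSymmetric_toEuclideanLin_iff.mpr hA, hA.toEuclideanLin_eigenvectorBasis,
    inner_smul_left, RCLike.conj_ofReal]

theorem ker_toEuclideanLin : LinearMap.ker (toEuclideanLin A) = hA.spectralSubspace (· = 0) := by
  ext u
  rw [LinearMap.mem_ker, mem_spectralSubspace_iff,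
    ← hA.eigenvectorBasis.repr.map_eq_zero_iff, PiLp.ext_iff]
  simp [hA.eigenvectorBasis_repr_toEuclideanLin, or_iff_not_imp_left]

theorem re_inner_toEuclideanLin_self (u : EuclideanSpace 𝕜 ι) :
    re ⟪toEuclideanLin A u, u⟫_𝕜 =
      ∑ i, hA.eigenvalues i * ‖hA.eigenvectorBasis.repr u i‖ ^ 2 := by
  rw [← hA.eigenvectorBasis.sum_inner_mul_inner, map_sum]
  refine Finset.sum_congr rfl fun i _ => ?_
  rw [← inner_conj_symm, ← OrthonormalBasis.repr_apply_apply,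
    ← OrthonormalBasis.repr_apply_apply, eigenvectorBasis_repr_toEuclideanLin,
    (starRingEnd 𝕜).map_mul, RCLike.conj_ofReal, mul_assoc, RCLike.conj_mul]
  norm_cast

theorem toEuclideanLin_eq_zero_iff (u : EuclideanSpace 𝕜 ι) :
    toEuclideanLin A u = 0 ↔
      ∀ i, hA.eigenvalues i * ‖hA.eigenvectorBasis.repr u i‖ ^ 2 = 0 := by
  rw [← LinearMap.mem_ker, hA.ker_toEuclideanLin, mem_spectralSubspace_iff]
  simp [or_iff_not_imp_left]

theorem eigenvalue_mul_norm_sq_nonneg_of_mem {u : EuclideanSpace 𝕜 ι}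
    (hu : u ∈ hA.spectralSubspace (0 ≤ ·)) (i : ι) :
    0 ≤ hA.eigenvalues i * ‖hA.eigenvectorBasis.repr u i‖ ^ 2 := by
  by_cases hi : 0 ≤ hA.eigenvalues i
  · positivity
  · simp [hA.mem_spectralSubspace_iff.mp hu i hi]

theorem eigenvalue_mul_norm_sq_nonpos_of_mem {u : EuclideanSpace 𝕜 ι}
    (hu : u ∈ hA.spectralSubspace (· ≤ 0)) (i : ι) :
    hA.eigenvalues i * ‖hA.eigenvectorBasis.repr u i‖ ^ 2 ≤ 0 := by
  by_cases hi : hA.eigenvalues i ≤ 0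
  · exact mul_nonpos_of_nonpos_of_nonneg hi (by positivity)
  · simp [hA.mem_spectralSubspace_iff.mp hu i hi]

theorem re_inner_toEuclideanLin_nonneg_of_mem {u : EuclideanSpace 𝕜 ι}
    (hu : u ∈ hA.spectralSubspace (0 ≤ ·)) : 0 ≤ re ⟪toEuclideanLin A u, u⟫_𝕜 := by
  rw [hA.re_inner_toEuclideanLin_self]
  exact Finset.sum_nonneg fun i _ => hA.eigenvalue_mul_norm_sq_nonneg_of_mem hu i

theorem re_inner_toEuclideanLin_nonpos_of_mem {u : EuclideanSpace 𝕜 ι}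
    (hu : u ∈ hA.spectralSubspace (· ≤ 0)) : re ⟪toEuclideanLin A u, u⟫_𝕜 ≤ 0 := by
  rw [hA.re_inner_toEuclideanLin_self]
  exact Finset.sum_nonpos fun i _ => hA.eigenvalue_mul_norm_sq_nonpos_of_mem hu i

theorem toEuclideanLin_eq_zero_of_mem_of_re_inner_nonpos {u : EuclideanSpace 𝕜 ι}
    (hu : u ∈ hA.spectralSubspace (0 ≤ ·)) (h : re ⟪toEuclideanLin A u, u⟫_𝕜 ≤ 0) :
    toEuclideanLin A u = 0 := by
  have hsum := le_antisymm h (hA.re_inner_toEuclideanLin_nonneg_of_mem hu)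
  rw [hA.re_inner_toEuclideanLin_self, Finset.sum_eq_zero_iff_of_nonneg
    fun i _ => hA.eigenvalue_mul_norm_sq_nonneg_of_mem hu i] at hsum
  exact (hA.toEuclideanLin_eq_zero_iff u).mpr fun i => hsum i (Finset.mem_univ i)

theorem toEuclideanLin_eq_zero_of_mem_of_re_inner_nonneg {u : EuclideanSpace 𝕜 ι}
    (hu : u ∈ hA.spectralSubspace (· ≤ 0)) (h : 0 ≤ re ⟪toEuclideanLin A u, u⟫_𝕜) :
    toEuclideanLin A u = 0 := by
  have hsum := le_antisymm (hA.re_inner_toEuclideanLin_nonpos_of_mem hu) h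
  rw [hA.re_inner_toEuclideanLin_self, Finset.sum_eq_zero_iff_of_nonpos
    fun i _ => hA.eigenvalue_mul_norm_sq_nonpos_of_mem hu i] at hsum
  exact (hA.toEuclideanLin_eq_zero_iff u).mpr fun i => hsum i (Finset.mem_univ i)

theorem ker_toEuclideanLin_eq_of_posSemidef_sub {B : Matrix ι ι 𝕜} (hB : B.IsHermitian)
    (hle : (B - A).PosSemidef)
    (hneg : Fintype.card {i // hA.eigenvalues i < 0} = Fintype.card {i // hB.eigenvalues i < 0})
    (hzero : Fintype.card {i // hA.eigenvalues i = 0} = Fintype.card {i // hB.eigenvalues i = 0}) :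
    LinearMap.ker (toEuclideanLin A) = LinearMap.ker (toEuclideanLin B) := by
  set W := hB.spectralSubspace (· ≤ 0)
  set N := hA.spectralSubspace (0 ≤ ·)
  have hWN : W ⊓ N ≤ LinearMap.ker (toEuclideanLin A) ⊓ LinearMap.ker (toEuclideanLin B) := by
    rintro u ⟨huW, huN⟩
    have hQ := re_inner_toEuclideanLin_le_of_posSemidef_sub hle u
    exact ⟨hA.toEuclideanLin_eq_zero_of_mem_of_re_inner_nonpos huN
        (hQ.trans (hB.re_inner_toEuclideanLin_nonpos_of_mem huW)),
      hB.toEuclideanLin_eq_zero_of_mem_of_re_inner_nonneg huW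
        ((hA.re_inner_toEuclideanLin_nonneg_of_mem huN).trans hQ)⟩
  have hdim : Fintype.card {i // hB.eigenvalues i = 0} ≤ finrank 𝕜 ↥(W ⊓ N) := by
    have := Submodule.finrank_add_finrank_le_finrank_add_finrank_inf W N
    rw [hB.finrank_spectralSubspace, hA.finrank_spectralSubspace, finrank_euclideanSpace,
      Fintype.card_subtype_le_eq_card_lt_add_card_eq,
      ← Fintype.card_subtype_lt_add_card_le hA.eigenvalues 0] at this
    omega
  have hkerA : W ⊓ N = LinearMap.ker (toEuclideanLin A) :=
    Submodule.eq_of_le_of_finrank_le (hWN.trans inf_le_left)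
      (by rwa [hA.ker_toEuclideanLin, finrank_spectralSubspace, hzero])
  have hkerB : W ⊓ N = LinearMap.ker (toEuclideanLin B) :=
    Submodule.eq_of_le_of_finrank_le (hWN.trans inf_le_right)
      (by rwa [hB.ker_toEuclideanLin, finrank_spectralSubspace])
  rw [← hkerA, hkerB]

end IsHermitian

end Matrix

theorem ker_eq_of_neg_and_zero_counts {n : ℕ} (H₁ H₂ : Matrix (Fin n) (Fin n) ℂ)
    (h1 : H₁.IsHermitian) (h2 : H₂.IsHermitian)
    (hle : (H₂ - H₁).PosSemidef)
    (hneg : negCount H₁ = negCount H₂) (hzero : zeroCount H₁ = zeroCount H₂) :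
    ∀ v : Fin n → ℂ, H₁ *ᵥ v = 0 ↔ H₂ *ᵥ v = 0 := by
  simp only [negCount, zeroCount, dif_pos h1, dif_pos h2] at hneg hzero
  have hker := h1.ker_toEuclideanLin_eq_of_posSemidef_sub h2 hle hneg hzero
  intro v
  simpa [toLpLin_toLp] using SetLike.ext_iff.mp hker (WithLp.toLp 2 v)
end

section
/- Let H₁ and H₂ be Hermitian n×n complex matrices with H₁ ≤ H₂, and suppose H₂⁺ ≤ H₁⁺ where H⁺ denotes the Moore–Penrose inverse. Then H₁ and H₂ have the same inertia and ker H₁ = ker H₂. -/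
open Matrix ComplexOrder

/-- `X` is the Moore–Penrose inverse of `A`. -/
def IsMoorePenroseInverse {n : ℕ} (A X : Matrix (Fin n) (Fin n) ℂ) : Prop :=
  A * X * A = A ∧ X * A * X = X ∧ (A * X)ᴴ = A * X ∧ (X * A)ᴴ = X * A

/-!
The inertia indices are extremal dimensions: `posCount A` is the largest dimension of a subspace on
which `x ↦ x⋆ A x` is positive definite, and `negCount A` the same for negative definite. Hence
`A ≤ B` gives `posCount A ≤ posCount B` and `negCount B ≤ negCount A`. A Hermitian matrix and its
Moore–Penrose inverse are diagonal in the same orthonormal eigenbasis, with eigenvalues `λ` and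
`λ⁻¹`, so they have the same inertia; the orderings `H₁ ≤ H₂` and `P₂ ≤ P₁` then squeeze the
inertia indices into equalities.

For the kernels, if `A ≤ B` then the form of `A` is negative semidefinite on `N ⊕ (ker A + ker B)`,
where `N` is the negative eigenspace of `B`. So `dim (ker A + ker B) ≤ n - posCount A - negCount B`,
which is `dim ker A = dim ker B` once the inertias agree.
-/

open Module Submodule

section QuadraticForm

variable {m : Type*} [Fintype m]

lemma dotProduct_mulVec_sum_smul {ι : Type*} [Fintype ι] {v : ι → EuclideanSpace ℂ m}
    (hv : Orthonormal ℂ v) {B : Matrix m m ℂ} {μ : ι → ℝ}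
    (hB : ∀ i, B *ᵥ ⇑(v i) = μ i • ⇑(v i)) (c : ι → ℂ) :
    star (∑ i, c i • ⇑(v i)) ⬝ᵥ (B *ᵥ ∑ i, c i • ⇑(v i)) =
      ((∑ i, μ i * Complex.normSq (c i) : ℝ) : ℂ) := by
  have hBx : B *ᵥ ∑ i, c i • ⇑(v i) = ⇑(∑ i, (c i * μ i) • v i) := by
    simp [mulVec_sum, mulVec_smul, hB, mul_smul, Complex.coe_smul]
  have hx : ∑ i, c i • ⇑(v i) = ⇑(∑ i, c i • v i) := by simp
  rw [dotProduct_comm, hBx, hx, ← EuclideanSpace.inner_eq_star_dotProduct, hv.inner_sum]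
  push_cast
  refine Finset.sum_congr rfl fun i _ => ?_
  rw [Complex.normSq_eq_conj_mul_self]
  ring

lemma dotProduct_mulVec_pos_of_mem_span {ι : Type*} [Fintype ι] {v : ι → EuclideanSpace ℂ m}
    (hv : Orthonormal ℂ v) {B : Matrix m m ℂ} {μ : ι → ℝ}
    (hB : ∀ i, B *ᵥ ⇑(v i) = μ i • ⇑(v i)) (hμ : ∀ i, 0 < μ i) {x : m → ℂ}
    (hx : x ∈ span ℂ (Set.range fun i => ⇑(v i))) (hx0 : x ≠ 0) :
    0 < star x ⬝ᵥ (B *ᵥ x) := by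
  obtain ⟨c, rfl⟩ := (mem_span_range_iff_exists_fun ℂ).mp hx
  obtain ⟨i, hi⟩ : ∃ i, c i ≠ 0 := by
    by_contra! h
    simp [h] at hx0
  rw [dotProduct_mulVec_sum_smul hv hB, Complex.zero_lt_real]
  exact Finset.sum_pos' (fun j _ => mul_nonneg (hμ j).le (Complex.normSq_nonneg _))
    ⟨i, Finset.mem_univ _, mul_pos (hμ i) (Complex.normSq_pos.mpr hi)⟩

lemma dotProduct_mulVec_nonneg_of_mem_span {ι : Type*} [Fintype ι]
    {v : ι → EuclideanSpace ℂ m} (hv : Orthonormal ℂ v) {B : Matrix m m ℂ} {μ : ι → ℝ}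
    (hB : ∀ i, B *ᵥ ⇑(v i) = μ i • ⇑(v i)) (hμ : ∀ i, 0 ≤ μ i) {x : m → ℂ}
    (hx : x ∈ span ℂ (Set.range fun i => ⇑(v i))) :
    0 ≤ star x ⬝ᵥ (B *ᵥ x) := by
  obtain ⟨c, rfl⟩ := (mem_span_range_iff_exists_fun ℂ).mp hx
  rw [dotProduct_mulVec_sum_smul hv hB, Complex.zero_le_real]
  exact Finset.sum_nonneg fun j _ => mul_nonneg (hμ j) (Complex.normSq_nonneg _)

lemma finrank_span_range_ofLp {ι : Type*} [Fintype ι] {v : ι → EuclideanSpace ℂ m}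
    (hv : Orthonormal ℂ v) :
    finrank ℂ (span ℂ (Set.range fun i => ⇑(v i))) = Fintype.card ι :=
  finrank_span_eq_card (hv.linearIndependent.map' _ (WithLp.linearEquiv 2 ℂ (m → ℂ)).ker)

lemma dotProduct_mulVec_le_of_posSemidef_sub {A B : Matrix m m ℂ} (h : (B - A).PosSemidef)
    (x : m → ℂ) : star x ⬝ᵥ (A *ᵥ x) ≤ star x ⬝ᵥ (B *ᵥ x) := by
  simpa [sub_mulVec] using h.dotProduct_mulVec_nonneg x

lemma dotProduct_mulVec_add_of_mulVec_eq_zero {A : Matrix m m ℂ} (hA : A.IsHermitian)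
    {k : m → ℂ} (hk : A *ᵥ k = 0) (x : m → ℂ) :
    star (x + k) ⬝ᵥ (A *ᵥ (x + k)) = star x ⬝ᵥ (A *ᵥ x) := by
  have hkA : star k ᵥ* A = 0 := by rw [← hA.eq, ← star_mulVec, hk, star_zero]
  simp [mulVec_add, dotProduct_mulVec (star k), hkA, hk]

lemma finrank_add_finrank_le_of_pos_of_nonpos {A : Matrix m m ℂ} {W W' : Submodule ℂ (m → ℂ)}
    (hW : ∀ x ∈ W, x ≠ 0 → 0 < star x ⬝ᵥ (A *ᵥ x)) (hW' : ∀ x ∈ W', star x ⬝ᵥ (A *ᵥ x) ≤ 0) :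
    finrank ℂ W + finrank ℂ W' ≤ Fintype.card m := by
  rw [← Module.finrank_fintype_fun_eq_card (R := ℂ)]
  exact finrank_add_finrank_le_of_disjoint <| disjoint_def.mpr fun x hx hx' =>
    by_contra fun hx0 => (hW x hx hx0).not_ge (hW' x hx')

end QuadraticForm

namespace Matrix.IsHermitian

variable {m : Type*} [Fintype m] [DecidableEq m] {A B : Matrix m m ℂ} (hA : A.IsHermitian)

noncomputable def eigenspan (p : ℝ → Prop) : Submodule ℂ (m → ℂ) :=
  span ℂ (Set.range fun i : {i // p (hA.eigenvalues i)} => ⇑(hA.eigenvectorBasis i))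

lemma orthonormal_eigenvectorBasis_subtype (p : ℝ → Prop) :
    Orthonormal ℂ fun i : {i // p (hA.eigenvalues i)} => hA.eigenvectorBasis i :=
  hA.eigenvectorBasis.orthonormal.comp _ Subtype.val_injective

lemma finrank_eigenspan (p : ℝ → Prop) [DecidablePred p] :
    finrank ℂ (hA.eigenspan p) = Fintype.card {i // p (hA.eigenvalues i)} :=
  finrank_span_range_ofLp (hA.orthonormal_eigenvectorBasis_subtype p)

lemma dotProduct_mulVec_pos_of_mem_eigenspan {p : ℝ → Prop} [DecidablePred p] {f : ℝ → ℝ}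
    (hB : ∀ i, B *ᵥ ⇑(hA.eigenvectorBasis i) = f (hA.eigenvalues i) • ⇑(hA.eigenvectorBasis i))
    (hf : ∀ t, p t → 0 < f t) {x : m → ℂ} (hx : x ∈ hA.eigenspan p) (hx0 : x ≠ 0) :
    0 < star x ⬝ᵥ (B *ᵥ x) :=
  dotProduct_mulVec_pos_of_mem_span (hA.orthonormal_eigenvectorBasis_subtype p)
    (fun i => hB i) (fun i => hf _ i.2) hx hx0

lemma dotProduct_mulVec_nonneg_of_mem_eigenspan {p : ℝ → Prop} [DecidablePred p] {f : ℝ → ℝ}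
    (hB : ∀ i, B *ᵥ ⇑(hA.eigenvectorBasis i) = f (hA.eigenvalues i) • ⇑(hA.eigenvectorBasis i))
    (hf : ∀ t, p t → 0 ≤ f t) {x : m → ℂ} (hx : x ∈ hA.eigenspan p) :
    0 ≤ star x ⬝ᵥ (B *ᵥ x) :=
  dotProduct_mulVec_nonneg_of_mem_span (hA.orthonormal_eigenvectorBasis_subtype p)
    (fun i => hB i) (fun i => hf _ i.2) hx

lemma dotProduct_mulVec_neg_of_mem_eigenspan {p : ℝ → Prop} [DecidablePred p] {f : ℝ → ℝ}
    (hB : ∀ i, B *ᵥ ⇑(hA.eigenvectorBasis i) = f (hA.eigenvalues i) • ⇑(hA.eigenvectorBasis i))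
    (hf : ∀ t, p t → f t < 0) {x : m → ℂ} (hx : x ∈ hA.eigenspan p) (hx0 : x ≠ 0) :
    star x ⬝ᵥ (B *ᵥ x) < 0 := by
  simpa [neg_mulVec] using hA.dotProduct_mulVec_pos_of_mem_eigenspan (B := -B) (f := (-f ·))
    (fun i => by rw [neg_mulVec, hB, neg_smul]) (fun t ht => neg_pos.mpr (hf t ht)) hx hx0

lemma dotProduct_mulVec_nonpos_of_mem_eigenspan {p : ℝ → Prop} [DecidablePred p] {f : ℝ → ℝ}
    (hB : ∀ i, B *ᵥ ⇑(hA.eigenvectorBasis i) = f (hA.eigenvalues i) • ⇑(hA.eigenvectorBasis i))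
    (hf : ∀ t, p t → f t ≤ 0) {x : m → ℂ} (hx : x ∈ hA.eigenspan p) :
    star x ⬝ᵥ (B *ᵥ x) ≤ 0 := by
  simpa [neg_mulVec] using hA.dotProduct_mulVec_nonneg_of_mem_eigenspan (B := -B) (f := (-f ·))
    (fun i => by rw [neg_mulVec, hB, neg_smul]) (fun t ht => neg_nonneg.mpr (hf t ht)) hx

end Matrix.IsHermitian

section Inertia

variable {n : ℕ} {A B : Matrix (Fin n) (Fin n) ℂ}

lemma posCount_eq_card (hA : A.IsHermitian) :
    posCount A = Fintype.card {i // 0 < hA.eigenvalues i} := dif_pos hA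

lemma negCount_eq_card (hA : A.IsHermitian) :
    negCount A = Fintype.card {i // hA.eigenvalues i < 0} := dif_pos hA

lemma zeroCount_eq_card (hA : A.IsHermitian) :
    zeroCount A = Fintype.card {i // hA.eigenvalues i = 0} := dif_pos hA

lemma posCount_add_negCount_add_zeroCount (hA : A.IsHermitian) :
    posCount A + negCount A + zeroCount A = n := by
  simp only [posCount_eq_card hA, negCount_eq_card hA, zeroCount_eq_card hA,
    Fintype.card_subtype, Finset.card_filter, ← Finset.sum_add_distrib]
  calc _ = ∑ _i : Fin n, 1 := Finset.sum_congr rfl fun i _ => by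
        rcases lt_trichotomy (hA.eigenvalues i) 0 with h | h | h
        · simp [h, h.ne, h.not_gt]
        · simp [h]
        · simp [h, h.ne', h.not_gt]
    _ = n := by simp

lemma finrank_ker_mulVecLin (hA : A.IsHermitian) :
    finrank ℂ (LinearMap.ker A.mulVecLin) = zeroCount A := by
  have hrank := LinearMap.finrank_range_add_finrank_ker A.mulVecLin
  rw [← Matrix.rank, hA.rank_eq_card_non_zero_eigs, Fintype.card_subtype_compl,
    finrank_fin_fun, Fintype.card_fin] at hrank
  have := (Fintype.card_subtype_le fun i => hA.eigenvalues i = 0).trans_eq (Fintype.card_fin n)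
  rw [zeroCount_eq_card hA]
  omega

lemma finrank_add_posCount_le (hA : A.IsHermitian) {W : Submodule ℂ (Fin n → ℂ)}
    (hW : ∀ x ∈ W, star x ⬝ᵥ (A *ᵥ x) ≤ 0) : finrank ℂ W + posCount A ≤ n := by
  have := finrank_add_finrank_le_of_pos_of_nonpos
    (fun x hx hx0 => hA.dotProduct_mulVec_pos_of_mem_eigenspan (p := fun t => 0 < t) (f := id)
      hA.mulVec_eigenvectorBasis (fun _ ht => ht) hx hx0) hW
  rwa [hA.finrank_eigenspan, ← posCount_eq_card hA, Fintype.card_fin, add_comm] at this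

lemma finrank_le_posCount (hA : A.IsHermitian) {W : Submodule ℂ (Fin n → ℂ)}
    (hW : ∀ x ∈ W, x ≠ 0 → 0 < star x ⬝ᵥ (A *ᵥ x)) : finrank ℂ W ≤ posCount A := by
  have := finrank_add_finrank_le_of_pos_of_nonpos hW
    (fun x hx => hA.dotProduct_mulVec_nonpos_of_mem_eigenspan (p := fun t => ¬ 0 < t) (f := id)
      hA.mulVec_eigenvectorBasis (fun _ ht => not_lt.mp ht) hx)
  rw [hA.finrank_eigenspan, Fintype.card_subtype_compl, Fintype.card_fin] at this
  have := (Fintype.card_subtype_le fun i => 0 < hA.eigenvalues i).trans_eq (Fintype.card_fin n)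
  rw [posCount_eq_card hA]
  omega

lemma finrank_le_negCount (hA : A.IsHermitian) {W : Submodule ℂ (Fin n → ℂ)}
    (hW : ∀ x ∈ W, x ≠ 0 → star x ⬝ᵥ (A *ᵥ x) < 0) : finrank ℂ W ≤ negCount A := by
  have hnonneg (x) (hx : x ∈ hA.eigenspan (¬ · < 0)) : 0 ≤ star x ⬝ᵥ (A *ᵥ x) :=
    hA.dotProduct_mulVec_nonneg_of_mem_eigenspan (f := id) hA.mulVec_eigenvectorBasis
      (fun _ ht => not_lt.mp ht) hx
  have := finrank_add_finrank_le_of_pos_of_nonpos (A := -A)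
    (fun x hx hx0 => by simpa [neg_mulVec] using hW x hx hx0)
    (fun x hx => by simpa [neg_mulVec] using hnonneg x hx)
  rw [hA.finrank_eigenspan, Fintype.card_subtype_compl, Fintype.card_fin] at this
  have := (Fintype.card_subtype_le fun i => hA.eigenvalues i < 0).trans_eq (Fintype.card_fin n)
  rw [negCount_eq_card hA]
  omega

lemma posCount_le_posCount_of_posSemidef_sub (hA : A.IsHermitian) (hB : B.IsHermitian)
    (h : (B - A).PosSemidef) : posCount A ≤ posCount B := by
  rw [posCount_eq_card hA, ← hA.finrank_eigenspan (0 < ·)]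
  exact finrank_le_posCount hB fun x hx hx0 =>
    (hA.dotProduct_mulVec_pos_of_mem_eigenspan (f := id) hA.mulVec_eigenvectorBasis
      (fun _ ht => ht) hx hx0).trans_le (dotProduct_mulVec_le_of_posSemidef_sub h x)

lemma negCount_le_negCount_of_posSemidef_sub (hA : A.IsHermitian) (hB : B.IsHermitian)
    (h : (B - A).PosSemidef) : negCount B ≤ negCount A := by
  rw [negCount_eq_card hB, ← hB.finrank_eigenspan (· < 0)]
  exact finrank_le_negCount hA fun x hx hx0 => (dotProduct_mulVec_le_of_posSemidef_sub h x).trans_lt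
    (hB.dotProduct_mulVec_neg_of_mem_eigenspan (f := id) hB.mulVec_eigenvectorBasis
      (fun _ ht => ht) hx hx0)

end Inertia

namespace IsMoorePenroseInverse

variable {n : ℕ} {A X : Matrix (Fin n) (Fin n) ℂ}

lemma symm (h : IsMoorePenroseInverse A X) : IsMoorePenroseInverse X A :=
  ⟨h.2.1, h.1, h.2.2.2, h.2.2.1⟩

lemma commute (hA : A.IsHermitian) (h : IsMoorePenroseInverse A X) : Commute X A := by
  have hAAX : A * (A * X) = A := calc
    A * (A * X) = Aᴴ * (A * X)ᴴ := by rw [hA.eq, h.2.2.1]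
    _ = (A * X * A)ᴴ := (conjTranspose_mul _ _).symm
    _ = A := by rw [h.1, hA.eq]
  have hXAA : X * A * A = A := calc
    X * A * A = (X * A)ᴴ * Aᴴ := by rw [hA.eq, h.2.2.2]
    _ = (A * (X * A))ᴴ := (conjTranspose_mul _ _).symm
    _ = A := by rw [← Matrix.mul_assoc, h.1, hA.eq]
  calc X * A = X * (A * (A * X)) := by rw [hAAX]
    _ = X * A * A * X := by simp only [Matrix.mul_assoc]
    _ = A * X := by rw [hXAA]

lemma isHermitian (hA : A.IsHermitian) (h : IsMoorePenroseInverse A X) : X.IsHermitian := by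
  have hAX : A * X = A * Xᴴ := by
    rw [← (h.commute hA).eq, ← h.2.2.2, conjTranspose_mul, hA.eq]
  have hXA : X * A = Xᴴ * A := by
    rw [(h.commute hA).eq, ← h.2.2.1, conjTranspose_mul, hA.eq]
  calc Xᴴ = (X * A * X)ᴴ := by rw [h.2.1]
    _ = Xᴴ * A * Xᴴ := by simp [conjTranspose_mul, hA.eq, Matrix.mul_assoc]
    _ = X * (A * X) := by rw [hAX, ← Matrix.mul_assoc, hXA]
    _ = X := by rw [← Matrix.mul_assoc, h.2.1]

/-- For a zero eigenvalue this says `X v = 0`, in accordance with `0⁻¹ = 0`. -/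
lemma mulVec_eigenvectorBasis (hA : A.IsHermitian) (h : IsMoorePenroseInverse A X) (i : Fin n) :
    X *ᵥ ⇑(hA.eigenvectorBasis i) = (hA.eigenvalues i)⁻¹ • ⇑(hA.eigenvectorBasis i) := by
  set v := ⇑(hA.eigenvectorBasis i)
  set r := hA.eigenvalues i
  have hv : A *ᵥ v = r • v := hA.mulVec_eigenvectorBasis i
  have hXv : A *ᵥ (X *ᵥ v) = r • (X *ᵥ v) := by
    rw [mulVec_mulVec, ← (h.commute hA).eq, ← mulVec_mulVec, hv, mulVec_smul]
  by_cases hr : r = 0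
  · have : X *ᵥ v = X *ᵥ (X *ᵥ (A *ᵥ v)) := by
      rw [mulVec_mulVec, mulVec_mulVec, Matrix.mul_assoc, (h.commute hA).eq, ← Matrix.mul_assoc,
        h.2.1]
    rw [this, hv, hr, zero_smul, mulVec_zero, mulVec_zero, _root_.inv_zero, zero_smul]
  · have hAXv : A *ᵥ (X *ᵥ v) = v := by
      have := congrArg (· *ᵥ v) h.1
      simp only [← mulVec_mulVec, hv, mulVec_smul] at this
      exact smul_right_injective _ hr this
    rw [eq_inv_smul_iff₀ hr, ← hXv, hAXv]

lemma posCount_le (hA : A.IsHermitian) (h : IsMoorePenroseInverse A X) :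
    posCount A ≤ posCount X := by
  rw [posCount_eq_card hA, ← hA.finrank_eigenspan (0 < ·)]
  exact finrank_le_posCount (h.isHermitian hA) fun x hx hx0 =>
    hA.dotProduct_mulVec_pos_of_mem_eigenspan (h.mulVec_eigenvectorBasis hA)
      (fun _ ht => inv_pos.mpr ht) hx hx0

lemma negCount_le (hA : A.IsHermitian) (h : IsMoorePenroseInverse A X) :
    negCount A ≤ negCount X := by
  rw [negCount_eq_card hA, ← hA.finrank_eigenspan (· < 0)]
  exact finrank_le_negCount (h.isHermitian hA) fun x hx hx0 =>
    hA.dotProduct_mulVec_neg_of_mem_eigenspan (h.mulVec_eigenvectorBasis hA)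
      (fun _ ht => inv_lt_zero.mpr ht) hx hx0

lemma posCount_eq (hA : A.IsHermitian) (h : IsMoorePenroseInverse A X) :
    posCount X = posCount A :=
  le_antisymm (h.symm.posCount_le (h.isHermitian hA)) (h.posCount_le hA)

lemma negCount_eq (hA : A.IsHermitian) (h : IsMoorePenroseInverse A X) :
    negCount X = negCount A :=
  le_antisymm (h.symm.negCount_le (h.isHermitian hA)) (h.negCount_le hA)

end IsMoorePenroseInverse

section Kernel

variable {n : ℕ} {A B : Matrix (Fin n) (Fin n) ℂ}

lemma finrank_ker_sup_ker_add_posCount_add_negCount_le (hA : A.IsHermitian)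
    (hB : B.IsHermitian) (h : (B - A).PosSemidef) :
    finrank ℂ ↥(LinearMap.ker A.mulVecLin ⊔ LinearMap.ker B.mulVecLin) + posCount A + negCount B
      ≤ n := by
  set K := LinearMap.ker A.mulVecLin ⊔ LinearMap.ker B.mulVecLin
  set N := hB.eigenspan (· < 0)
  have hK (x) (hx : x ∈ K) : 0 ≤ star x ⬝ᵥ (B *ᵥ x) := by
    obtain ⟨k, hk, z, hz, rfl⟩ := mem_sup.mp hx
    rw [LinearMap.mem_ker, mulVecLin_apply] at hk hz
    calc 0 = star k ⬝ᵥ (A *ᵥ k) := by simp [hk]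
      _ ≤ star k ⬝ᵥ (B *ᵥ k) := dotProduct_mulVec_le_of_posSemidef_sub h k
      _ = star (k + z) ⬝ᵥ (B *ᵥ (k + z)) := (dotProduct_mulVec_add_of_mulVec_eq_zero hB hz k).symm
  have hdisj : Disjoint N K := disjoint_def.mpr fun x hxN hxK => by_contra fun hx0 =>
    (hB.dotProduct_mulVec_neg_of_mem_eigenspan (f := id) hB.mulVec_eigenvectorBasis
      (fun _ ht => ht) hxN hx0).not_ge (hK x hxK)
  have hNK (x) (hx : x ∈ N ⊔ K) : star x ⬝ᵥ (A *ᵥ x) ≤ 0 := by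
    obtain ⟨y, hy, w, hw, rfl⟩ := mem_sup.mp hx
    obtain ⟨k, hk, z, hz, rfl⟩ := mem_sup.mp hw
    rw [LinearMap.mem_ker, mulVecLin_apply] at hk hz
    calc star (y + (k + z)) ⬝ᵥ (A *ᵥ (y + (k + z)))
        = star (y + z) ⬝ᵥ (A *ᵥ (y + z)) := by
          rw [show y + (k + z) = y + z + k by abel, dotProduct_mulVec_add_of_mulVec_eq_zero hA hk]
      _ ≤ star (y + z) ⬝ᵥ (B *ᵥ (y + z)) := dotProduct_mulVec_le_of_posSemidef_sub h _
      _ = star y ⬝ᵥ (B *ᵥ y) := dotProduct_mulVec_add_of_mulVec_eq_zero hB hz y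
      _ ≤ 0 := hB.dotProduct_mulVec_nonpos_of_mem_eigenspan (f := id) hB.mulVec_eigenvectorBasis
          (fun _ ht => ht.le) hy
  have hsum := finrank_sup_add_finrank_inf_eq N K
  rw [hdisj.eq_bot, finrank_bot, add_zero, hB.finrank_eigenspan, ← negCount_eq_card hB] at hsum
  have := finrank_add_posCount_le hA hNK
  omega

lemma ker_mulVecLin_eq_of_posSemidef_sub (hA : A.IsHermitian) (hB : B.IsHermitian)
    (h : (B - A).PosSemidef) (hpos : posCount A = posCount B) (hneg : negCount A = negCount B) :
    LinearMap.ker A.mulVecLin = LinearMap.ker B.mulVecLin := by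
  have := finrank_ker_sup_ker_add_posCount_add_negCount_le hA hB h
  have := posCount_add_negCount_add_zeroCount hA
  have := posCount_add_negCount_add_zeroCount hB
  have hkA := finrank_ker_mulVecLin hA
  have hkB := finrank_ker_mulVecLin hB
  have hA' : LinearMap.ker A.mulVecLin ≤ LinearMap.ker A.mulVecLin ⊔ LinearMap.ker B.mulVecLin :=
    le_sup_left
  have hB' : LinearMap.ker B.mulVecLin ≤ LinearMap.ker A.mulVecLin ⊔ LinearMap.ker B.mulVecLin :=
    le_sup_right
  exact (eq_of_le_of_finrank_le hA' (by omega)).trans (eq_of_le_of_finrank_le hB' (by omega)).symm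

end Kernel

theorem mp_antitone_implies_inertia {n : ℕ} (H₁ H₂ P₁ P₂ : Matrix (Fin n) (Fin n) ℂ)
    (h1 : H₁.IsHermitian) (h2 : H₂.IsHermitian)
    (hle : (H₂ - H₁).PosSemidef)
    (hP1 : IsMoorePenroseInverse H₁ P₁) (hP2 : IsMoorePenroseInverse H₂ P₂)
    (hPle : (P₁ - P₂).PosSemidef) :
    posCount H₁ = posCount H₂ ∧ negCount H₁ = negCount H₂ ∧
      zeroCount H₁ = zeroCount H₂ ∧
      ∀ v : Fin n → ℂ, H₁ *ᵥ v = 0 ↔ H₂ *ᵥ v = 0 := by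
  have hP₁ := hP1.isHermitian h1
  have hP₂ := hP2.isHermitian h2
  have hpos : posCount H₁ = posCount H₂ := by
    have := posCount_le_posCount_of_posSemidef_sub h1 h2 hle
    have := posCount_le_posCount_of_posSemidef_sub hP₂ hP₁ hPle
    rw [hP1.posCount_eq h1, hP2.posCount_eq h2] at this
    omega
  have hneg : negCount H₁ = negCount H₂ := by
    have := negCount_le_negCount_of_posSemidef_sub h1 h2 hle
    have := negCount_le_negCount_of_posSemidef_sub hP₂ hP₁ hPle
    rw [hP1.negCount_eq h1, hP2.negCount_eq h2] at this
    omega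
  have hzero : zeroCount H₁ = zeroCount H₂ := by
    have := posCount_add_negCount_add_zeroCount h1
    have := posCount_add_negCount_add_zeroCount h2
    omega
  have hker := ker_mulVecLin_eq_of_posSemidef_sub h1 h2 hle hpos hneg
  exact ⟨hpos, hneg, hzero, fun v => by simpa using SetLike.ext_iff.mp hker v⟩
end

section
/- Let H₁ and H₂ be Hermitian n×n complex matrices with H₁ ≤ H₂ and suppose H₁ is invertible with exactly the same number of negative eigenvalues as H₂ (both counted with multiplicity), and H₂ is invertible. Then for every ε > 0 small enough that H₁ - ε and H₂ - ε remain invertible with unchanged inertia, (H₂ - ε)⁻¹ ≤ (H₁ - ε)⁻¹. -/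
/-!
Write `ν(M)` for the number of negative eigenvalues of a Hermitian matrix `M`; it is the largest
dimension of a subspace on which `x ↦ xᴴ M x` is negative definite, which makes it invariant under
congruence (Sylvester) and additive on block-diagonal matrices.

Put `A = H₁ - ε` and `B = H₂ - ε`, so that `B - A = H₂ - H₁ = C Cᴴ` for some `C`. The Hermitian
block matrix `K = [[A, C], [Cᴴ, -1]]` has Schur complement `-(1 + Cᴴ A⁻¹ C)` with respect to `A`
and Schur complement `A + C Cᴴ = B` with respect to `-1`. Block elimination is a congruence, so
`ν(K)` equals both `ν(A) + ν(-(1 + Cᴴ A⁻¹ C))` and `ν(B) + n` (Haynsworth). Since `ν(A) = ν(B)`,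
all `n` eigenvalues of `-(1 + Cᴴ A⁻¹ C)` are negative, i.e. `N = 1 + Cᴴ A⁻¹ C` is positive
definite, and then `A⁻¹ - B⁻¹ = (Cᴴ B⁻¹)ᴴ N (Cᴴ B⁻¹)` is positive semidefinite.
-/

open Matrix ComplexOrder

open Module

section SumProd

variable {K m k : Type*} [DivisionRing K]

def Submodule.sumProd (W₁ : Submodule K (m → K)) (W₂ : Submodule K (k → K)) :
    Submodule K (m ⊕ k → K) :=
  (W₁.prod W₂).comap (LinearEquiv.sumArrowLequivProdArrow m k K K).toLinearMap

lemma Submodule.mem_sumProd {W₁ : Submodule K (m → K)} {W₂ : Submodule K (k → K)}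
    {v : m ⊕ k → K} : v ∈ W₁.sumProd W₂ ↔ v ∘ Sum.inl ∈ W₁ ∧ v ∘ Sum.inr ∈ W₂ :=
  Iff.rfl

lemma Submodule.finrank_sumProd [Finite m] [Finite k] (W₁ : Submodule K (m → K))
    (W₂ : Submodule K (k → K)) :
    finrank K (W₁.sumProd W₂) = finrank K W₁ + finrank K W₂ := by
  have hprod : W₁.prod W₂ = LinearMap.range (W₁.subtype.prodMap W₂.subtype) := by
    rw [LinearMap.range_prodMap, Submodule.range_subtype, Submodule.range_subtype]
  rw [Submodule.sumProd, Submodule.comap_equiv_eq_map_symm, LinearEquiv.finrank_map_eq, hprod,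
    LinearMap.finrank_range_of_inj, Module.finrank_prod]
  exact Prod.map_injective.mpr ⟨W₁.injective_subtype, W₂.injective_subtype⟩

end SumProd

namespace Matrix

variable {𝕜 m k : Type*} [RCLike 𝕜] [Fintype m] [Fintype k]

def IsNegDefOn (A : Matrix m m 𝕜) (W : Submodule 𝕜 (m → 𝕜)) : Prop :=
  ∀ x ∈ W, x ≠ 0 → star x ⬝ᵥ A *ᵥ x < 0

def IsPosSemidefOn (A : Matrix m m 𝕜) (W : Submodule 𝕜 (m → 𝕜)) : Prop :=
  ∀ x ∈ W, 0 ≤ star x ⬝ᵥ A *ᵥ x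

section Subspaces

variable {A : Matrix m m 𝕜} {W V : Submodule 𝕜 (m → 𝕜)}

lemma IsNegDefOn.disjoint (hW : A.IsNegDefOn W) (hV : A.IsPosSemidefOn V) : Disjoint W V := by
  refine Submodule.disjoint_def.mpr fun x hxW hxV => ?_
  by_contra hx
  exact (hW x hxW hx).not_ge (hV x hxV)

lemma IsNegDefOn.finrank_add_finrank_le (hW : A.IsNegDefOn W) (hV : A.IsPosSemidefOn V) :
    finrank 𝕜 W + finrank 𝕜 V ≤ Fintype.card m := by
  rw [← Submodule.finrank_sup_add_finrank_inf_eq, (hW.disjoint hV).eq_bot, finrank_bot, add_zero,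
    ← Module.finrank_fintype_fun_eq_card 𝕜]
  exact Submodule.finrank_le _

lemma star_dotProduct_conjTranspose_mul_mul_mulVec (A P : Matrix m m 𝕜) (x : m → 𝕜) :
    star x ⬝ᵥ (Pᴴ * A * P) *ᵥ x = star (P *ᵥ x) ⬝ᵥ A *ᵥ (P *ᵥ x) := by
  rw [← mulVec_mulVec, ← mulVec_mulVec, dotProduct_mulVec, ← star_mulVec]

lemma IsNegDefOn.star_dotProduct_mulVec_nonpos (hW : A.IsNegDefOn W) {x : m → 𝕜} (hx : x ∈ W) :
    star x ⬝ᵥ A *ᵥ x ≤ 0 := by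
  rcases eq_or_ne x 0 with rfl | hx0
  · simp
  · exact (hW x hx hx0).le

lemma IsNegDefOn.map_mulVecLin {P : Matrix m m 𝕜} (hW : (Pᴴ * A * P).IsNegDefOn W) :
    A.IsNegDefOn (W.map P.mulVecLin) := by
  rintro _ ⟨x, hx, rfl⟩ hPx
  rw [mulVecLin_apply, ← star_dotProduct_conjTranspose_mul_mul_mulVec]
  exact hW x hx fun h => hPx (by simp [h])

lemma IsPosSemidefOn.map_mulVecLin {P : Matrix m m 𝕜} (hV : (Pᴴ * A * P).IsPosSemidefOn V) :
    A.IsPosSemidefOn (V.map P.mulVecLin) := by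
  rintro _ ⟨x, hx, rfl⟩
  rw [mulVecLin_apply, ← star_dotProduct_conjTranspose_mul_mul_mulVec]
  exact hV x hx

lemma finrank_map_mulVecLin {P : Matrix m m 𝕜} (hP : Function.Injective P.mulVec)
    (W : Submodule 𝕜 (m → 𝕜)) : finrank 𝕜 (W.map P.mulVecLin) = finrank 𝕜 W :=
  (Submodule.equivMapOfInjective _ hP W).finrank_eq.symm

lemma star_dotProduct_fromBlocks_zero_mulVec (X : Matrix m m 𝕜) (Y : Matrix k k 𝕜)
    (v : m ⊕ k → 𝕜) :
    star v ⬝ᵥ fromBlocks X 0 0 Y *ᵥ v =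
      star (v ∘ Sum.inl) ⬝ᵥ X *ᵥ (v ∘ Sum.inl) + star (v ∘ Sum.inr) ⬝ᵥ Y *ᵥ (v ∘ Sum.inr) := by
  obtain ⟨a, b, rfl⟩ : ∃ a b, v = Sum.elim a b := ⟨_, _, (Sum.elim_comp_inl_inr v).symm⟩
  simp [fromBlocks_mulVec, Function.star_sumElim, sumElim_dotProduct_sumElim]

variable {X : Matrix m m 𝕜} {Y : Matrix k k 𝕜} {W₁ : Submodule 𝕜 (m → 𝕜)}
  {W₂ : Submodule 𝕜 (k → 𝕜)}

lemma IsNegDefOn.sumProd (h₁ : X.IsNegDefOn W₁) (h₂ : Y.IsNegDefOn W₂) :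
    (fromBlocks X 0 0 Y).IsNegDefOn (W₁.sumProd W₂) := by
  intro v hv hv0
  obtain ⟨hv₁, hv₂⟩ := Submodule.mem_sumProd.mp hv
  rw [star_dotProduct_fromBlocks_zero_mulVec]
  by_cases hl : v ∘ Sum.inl = 0
  · have hr : v ∘ Sum.inr ≠ 0 := fun hr =>
      hv0 (by rw [← Sum.elim_comp_inl_inr v, hl, hr, Sum.elim_zero_zero])
    simpa [hl] using h₂ _ hv₂ hr
  · exact add_neg_of_neg_of_nonpos (h₁ _ hv₁ hl) (h₂.star_dotProduct_mulVec_nonpos hv₂)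

lemma IsPosSemidefOn.sumProd (h₁ : X.IsPosSemidefOn W₁) (h₂ : Y.IsPosSemidefOn W₂) :
    (fromBlocks X 0 0 Y).IsPosSemidefOn (W₁.sumProd W₂) := by
  intro v hv
  obtain ⟨hv₁, hv₂⟩ := Submodule.mem_sumProd.mp hv
  rw [star_dotProduct_fromBlocks_zero_mulVec]
  exact add_nonneg (h₁ _ hv₁) (h₂ _ hv₂)

end Subspaces

lemma finrank_spanSubset (p : m → Prop) [DecidablePred p] :
    finrank 𝕜 (Pi.spanSubset 𝕜 {i | p i}) = Fintype.card {i // p i} := by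
  rw [Pi.spanSubset, Set.image_eq_range, finrank_span_eq_card]
  · rfl
  · exact (Pi.basisFun 𝕜 m).linearIndependent.comp _ Subtype.val_injective

section Diagonal

variable [DecidableEq m]

lemma star_dotProduct_diagonal_mulVec (d : m → ℝ) (x : m → 𝕜) :
    star x ⬝ᵥ diagonal (RCLike.ofReal ∘ d) *ᵥ x = ((∑ i, d i * ‖x i‖ ^ 2 : ℝ) : 𝕜) := by
  simp [dotProduct, mulVec_diagonal, mul_left_comm _ (d _ : 𝕜), RCLike.conj_mul]

lemma isNegDefOn_diagonal_spanSubset (d : m → ℝ) :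
    (diagonal (RCLike.ofReal ∘ d)).IsNegDefOn (Pi.spanSubset 𝕜 {i | d i < 0}) := by
  intro x hx hx0
  have hsupp := Pi.mem_spanSubset_iff.mp hx
  obtain ⟨j, hj⟩ := Function.ne_iff.mp hx0
  have hdj : d j < 0 := by_contra fun h => hj (hsupp j h)
  rw [star_dotProduct_diagonal_mulVec, RCLike.ofReal_lt_zero]
  refine Finset.sum_neg' (fun i _ => ?_) ⟨j, Finset.mem_univ j, ?_⟩
  · by_cases hi : d i < 0
    · exact mul_nonpos_of_nonpos_of_nonneg hi.le (by positivity)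
    · simp [hsupp i hi]
  · exact mul_neg_of_neg_of_pos hdj (pow_pos (norm_pos_iff.mpr hj) 2)

lemma isPosSemidefOn_diagonal_spanSubset (d : m → ℝ) :
    (diagonal (RCLike.ofReal ∘ d)).IsPosSemidefOn (Pi.spanSubset 𝕜 {i | 0 ≤ d i}) := by
  intro x hx
  have hsupp := Pi.mem_spanSubset_iff.mp hx
  rw [star_dotProduct_diagonal_mulVec, RCLike.ofReal_nonneg]
  refine Finset.sum_nonneg fun i _ => ?_
  by_cases hi : 0 ≤ d i
  · positivity
  · simp [hsupp i hi]

end Diagonal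

lemma inv_sub_inv_eq_inv_mul_mul_inv {R : Type*} [CommRing R] [DecidableEq m]
    {A B : Matrix m m R} (hA : IsUnit A.det) (hB : IsUnit B.det) :
    A⁻¹ - B⁻¹ = B⁻¹ * ((B - A) + (B - A) * A⁻¹ * (B - A)) * B⁻¹ := by
  simp only [Matrix.mul_sub, Matrix.sub_mul, Matrix.mul_add, Matrix.add_mul, Matrix.mul_assoc,
    nonsing_inv_mul_cancel_left _ _ hA, nonsing_inv_mul_cancel_left _ _ hB, mul_nonsing_inv _ hA,
    mul_nonsing_inv _ hB, Matrix.mul_one, Matrix.one_mul]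
  abel

section Inertia

variable [DecidableEq m] [DecidableEq k] {A : Matrix m m 𝕜}

noncomputable def IsHermitian.negIndex (hA : A.IsHermitian) : ℕ :=
  Fintype.card {i // hA.eigenvalues i < 0}

lemma IsHermitian.conjTranspose_eigenvectorUnitary_mul_mul (hA : A.IsHermitian) :
    (hA.eigenvectorUnitary : Matrix m m 𝕜)ᴴ * A * (hA.eigenvectorUnitary : Matrix m m 𝕜) =
      diagonal (RCLike.ofReal ∘ hA.eigenvalues) := by
  simpa [Unitary.conjStarAlgAut_star_apply, ← star_eq_conjTranspose] using
    hA.conjStarAlgAut_star_eigenvectorUnitary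

lemma IsHermitian.exists_isNegDefOn_finrank_eq (hA : A.IsHermitian) :
    ∃ W : Submodule 𝕜 (m → 𝕜), A.IsNegDefOn W ∧ finrank 𝕜 W = hA.negIndex := by
  have hD := isNegDefOn_diagonal_spanSubset (𝕜 := 𝕜) hA.eigenvalues
  rw [← hA.conjTranspose_eigenvectorUnitary_mul_mul] at hD
  refine ⟨_, hD.map_mulVecLin, ?_⟩
  rw [finrank_map_mulVecLin (mulVec_injective_of_isUnit Unitary.isUnit_coe), finrank_spanSubset]
  rfl

lemma IsHermitian.exists_isPosSemidefOn_finrank_add_negIndex (hA : A.IsHermitian) :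
    ∃ V : Submodule 𝕜 (m → 𝕜), A.IsPosSemidefOn V ∧
      finrank 𝕜 V + hA.negIndex = Fintype.card m := by
  have hD := isPosSemidefOn_diagonal_spanSubset (𝕜 := 𝕜) hA.eigenvalues
  rw [← hA.conjTranspose_eigenvectorUnitary_mul_mul] at hD
  refine ⟨_, hD.map_mulVecLin, ?_⟩
  rw [finrank_map_mulVecLin (mulVec_injective_of_isUnit Unitary.isUnit_coe), finrank_spanSubset,
    IsHermitian.negIndex]
  simp_rw [← not_lt]
  rw [Fintype.card_subtype_compl, Nat.sub_add_cancel (Fintype.card_subtype_le _)]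

lemma IsNegDefOn.finrank_le_negIndex {W : Submodule 𝕜 (m → 𝕜)} (hA : A.IsHermitian)
    (hW : A.IsNegDefOn W) : finrank 𝕜 W ≤ hA.negIndex := by
  obtain ⟨V, hV, hVdim⟩ := hA.exists_isPosSemidefOn_finrank_add_negIndex
  have := hW.finrank_add_finrank_le hV
  omega

lemma IsPosSemidefOn.negIndex_add_finrank_le {V : Submodule 𝕜 (m → 𝕜)} (hA : A.IsHermitian)
    (hV : A.IsPosSemidefOn V) : hA.negIndex + finrank 𝕜 V ≤ Fintype.card m := by
  obtain ⟨W, hW, hWdim⟩ := hA.exists_isNegDefOn_finrank_eq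
  exact hWdim ▸ hW.finrank_add_finrank_le hV

lemma IsHermitian.negIndex_eq_card_iff (hA : A.IsHermitian) :
    hA.negIndex = Fintype.card m ↔ (-A).PosDef := by
  constructor
  · intro h
    obtain ⟨W, hW, hWdim⟩ := hA.exists_isNegDefOn_finrank_eq
    have hWtop : W = ⊤ :=
      Submodule.eq_top_of_finrank_eq (by rw [hWdim, h, finrank_fintype_fun_eq_card])
    refine .of_dotProduct_mulVec_pos hA.neg fun x hx => ?_
    rw [neg_mulVec, dotProduct_neg, neg_pos]
    exact hW x (hWtop ▸ Submodule.mem_top) hx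
  · intro h
    have hA' : A.IsNegDefOn ⊤ := fun x _ hx => by
      simpa [neg_mulVec] using h.dotProduct_mulVec_pos hx
    have := hA'.finrank_le_negIndex hA
    rw [finrank_top, finrank_fintype_fun_eq_card] at this
    exact le_antisymm (Fintype.card_subtype_le _) this

lemma IsHermitian.negIndex_le_of_eq_conjTranspose_mul_mul {B P : Matrix m m 𝕜}
    (hB : B.IsHermitian) (hA : A.IsHermitian) (hBA : B = Pᴴ * A * P)
    (hP : Function.Injective P.mulVec) : hB.negIndex ≤ hA.negIndex := by
  obtain ⟨W, hW, hWdim⟩ := hB.exists_isNegDefOn_finrank_eq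
  rw [hBA] at hW
  rw [← hWdim, ← finrank_map_mulVecLin hP]
  exact hW.map_mulVecLin.finrank_le_negIndex hA

/-- **Sylvester's law of inertia**, for the negative index. -/
lemma IsHermitian.negIndex_eq_of_eq_conjTranspose_mul_mul {B P : Matrix m m 𝕜}
    (hB : B.IsHermitian) (hA : A.IsHermitian) (hBA : B = Pᴴ * A * P) (hP : IsUnit P) :
    hB.negIndex = hA.negIndex := by
  have hPdet : IsUnit P.det := (isUnit_iff_isUnit_det P).mp hP
  have hAB : A = P⁻¹ᴴ * B * P⁻¹ := by
    have hPdet' : IsUnit Pᴴ.det := by rw [det_conjTranspose]; exact hPdet.star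
    rw [hBA, conjTranspose_nonsing_inv]
    simp [Matrix.mul_assoc, mul_nonsing_inv _ hPdet, nonsing_inv_mul_cancel_left _ _ hPdet']
  exact le_antisymm
    (hB.negIndex_le_of_eq_conjTranspose_mul_mul hA hBA (mulVec_injective_of_isUnit hP))
    (hA.negIndex_le_of_eq_conjTranspose_mul_mul hB hAB
      (mulVec_injective_of_isUnit (isUnit_nonsing_inv_iff.mpr hP)))

lemma IsHermitian.negIndex_fromBlocks_zero {X : Matrix m m 𝕜} {Y : Matrix k k 𝕜}
    (hX : X.IsHermitian) (hY : Y.IsHermitian) (hXY : (Matrix.fromBlocks X 0 0 Y).IsHermitian) :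
    hXY.negIndex = hX.negIndex + hY.negIndex := by
  apply le_antisymm
  · obtain ⟨V₁, hV₁, hdim₁⟩ := hX.exists_isPosSemidefOn_finrank_add_negIndex
    obtain ⟨V₂, hV₂, hdim₂⟩ := hY.exists_isPosSemidefOn_finrank_add_negIndex
    have := (hV₁.sumProd hV₂).negIndex_add_finrank_le hXY
    rw [Submodule.finrank_sumProd, Fintype.card_sum] at this
    omega
  · obtain ⟨W₁, hW₁, hdim₁⟩ := hX.exists_isNegDefOn_finrank_eq
    obtain ⟨W₂, hW₂, hdim₂⟩ := hY.exists_isNegDefOn_finrank_eq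
    have := (hW₁.sumProd hW₂).finrank_le_negIndex hXY
    rwa [Submodule.finrank_sumProd, hdim₁, hdim₂] at this

/-- **Haynsworth inertia additivity**, for the negative index. -/
lemma IsHermitian.negIndex_fromBlocks₁₁ {A : Matrix m m 𝕜} {B : Matrix m k 𝕜}
    {D S : Matrix k k 𝕜} (hA : A.IsHermitian) (hS : S.IsHermitian) (hAu : IsUnit A)
    (hSD : S = D - Bᴴ * A⁻¹ * B) (hK : (Matrix.fromBlocks A B Bᴴ D).IsHermitian) :
    hK.negIndex = hA.negIndex + hS.negIndex := by
  let := hAu.invertible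
  have hdet : IsUnit (Matrix.fromBlocks 1 (A⁻¹ * B) 0 1 : Matrix (m ⊕ k) (m ⊕ k) 𝕜) := by
    simp [isUnit_iff_isUnit_det]
  rw [hK.negIndex_eq_of_eq_conjTranspose_mul_mul (hA.fromBlocks conjTranspose_zero hS) ?_ hdet,
    hA.negIndex_fromBlocks_zero hS]
  rw [fromBlocks_eq_of_invertible₁₁ A B Bᴴ D, invOf_eq_nonsing_inv, hSD]
  simp [fromBlocks_conjTranspose, conjTranspose_nonsing_inv, hA.eq]

lemma IsHermitian.negIndex_fromBlocks₂₂ {A S : Matrix m m 𝕜} {B : Matrix m k 𝕜}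
    {D : Matrix k k 𝕜} (hD : D.IsHermitian) (hS : S.IsHermitian) (hDu : IsUnit D)
    (hSA : S = A - B * D⁻¹ * Bᴴ) (hK : (Matrix.fromBlocks A B Bᴴ D).IsHermitian) :
    hK.negIndex = hS.negIndex + hD.negIndex := by
  let := hDu.invertible
  have hdet : IsUnit (Matrix.fromBlocks 1 0 (D⁻¹ * Bᴴ) 1 : Matrix (m ⊕ k) (m ⊕ k) 𝕜) := by
    simp [isUnit_iff_isUnit_det]
  rw [hK.negIndex_eq_of_eq_conjTranspose_mul_mul (hS.fromBlocks conjTranspose_zero hD) ?_ hdet,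
    hS.negIndex_fromBlocks_zero hD]
  rw [fromBlocks_eq_of_invertible₂₂ A B Bᴴ D, invOf_eq_nonsing_inv, hSA]
  simp [fromBlocks_conjTranspose, conjTranspose_nonsing_inv, hD.eq]

open scoped MatrixOrder in
theorem IsHermitian.inv_sub_inv_posSemidef {A B : Matrix m m 𝕜} (hA : A.IsHermitian)
    (hB : B.IsHermitian) (hAu : IsUnit A) (hBu : IsUnit B) (hAB : (B - A).PosSemidef)
    (hneg : hA.negIndex = hB.negIndex) : (A⁻¹ - B⁻¹).PosSemidef := by
  obtain ⟨C, hC⟩ := CStarAlgebra.nonneg_iff_eq_mul_star_self.mp hAB.nonneg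
  rw [star_eq_conjTranspose] at hC
  have hm1 : (-1 : Matrix m m 𝕜).IsHermitian := isHermitian_one.neg
  have hK : (Matrix.fromBlocks A C Cᴴ (-1)).IsHermitian := hA.fromBlocks rfl hm1
  have hS : (-1 - Cᴴ * A⁻¹ * C).IsHermitian :=
    hm1.sub (isHermitian_conjTranspose_mul_mul C hA.inv)
  have h₁₁ := hA.negIndex_fromBlocks₁₁ hS hAu rfl hK
  have h₂₂ := hm1.negIndex_fromBlocks₂₂ hB isUnit_one.neg
    (by rw [inv_eq_left_inv (B := -1) (by simp)]; simp [← hC]) hK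
  have hm1_negIndex : hm1.negIndex = Fintype.card m :=
    hm1.negIndex_eq_card_iff.mpr (by simpa using PosDef.one)
  have hN : (1 + Cᴴ * A⁻¹ * C).PosDef := by
    simpa [sub_eq_add_neg, add_comm] using hS.negIndex_eq_card_iff.mp (by omega)
  have key : A⁻¹ - B⁻¹ = (Cᴴ * B⁻¹)ᴴ * (1 + Cᴴ * A⁻¹ * C) * (Cᴴ * B⁻¹) := by
    rw [inv_sub_inv_eq_inv_mul_mul_inv ((isUnit_iff_isUnit_det A).mp hAu)
      ((isUnit_iff_isUnit_det B).mp hBu), hC, conjTranspose_mul, conjTranspose_conjTranspose,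
      conjTranspose_nonsing_inv, hB.eq]
    simp only [Matrix.mul_add, Matrix.add_mul, Matrix.mul_one, Matrix.mul_assoc]
  rw [key]
  exact hN.posSemidef.conjTranspose_mul_mul_same _

end Inertia

end Matrix

lemma negCount_eq_negIndex {n : ℕ} {A : Matrix (Fin n) (Fin n) ℂ} (hA : A.IsHermitian) :
    negCount A = hA.negIndex :=
  dif_pos hA

theorem shifted_antitonicity_general {n : ℕ} (H₁ H₂ : Matrix (Fin n) (Fin n) ℂ)
    (h1 : H₁.IsHermitian) (h2 : H₂.IsHermitian)
    (hle : (H₂ - H₁).PosSemidef)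
    (hneg : negCount H₁ = negCount H₂)
    (ε : ℝ)
    (hu1e : IsUnit (H₁ - (ε : ℂ) • 1)) (hu2e : IsUnit (H₂ - (ε : ℂ) • 1))
    (hin1 : negCount (H₁ - (ε : ℂ) • 1) = negCount H₁ ∧
            posCount (H₁ - (ε : ℂ) • 1) = posCount H₁)
    (hin2 : negCount (H₂ - (ε : ℂ) • 1) = negCount H₂ ∧
            posCount (H₂ - (ε : ℂ) • 1) = posCount H₂) :
    ((H₁ - (ε : ℂ) • 1)⁻¹ - (H₂ - (ε : ℂ) • 1)⁻¹).PosSemidef := by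
  have hshift : ((ε : ℂ) • (1 : Matrix (Fin n) (Fin n) ℂ)).IsHermitian :=
    isHermitian_one.smul (Complex.conj_ofReal ε)
  have hA := h1.sub hshift
  have hB := h2.sub hshift
  refine hA.inv_sub_inv_posSemidef hB hu1e hu2e (by rwa [sub_sub_sub_cancel_right]) ?_
  rw [← negCount_eq_negIndex, ← negCount_eq_negIndex, hin1.1, hin2.1, hneg]

theorem shifted_antitonicity {n : ℕ} (H₁ H₂ : Matrix (Fin n) (Fin n) ℂ)
    (h1 : H₁.IsHermitian) (h2 : H₂.IsHermitian)
    (hu1 : IsUnit H₁) (hu2 : IsUnit H₂)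
    (hle : (H₂ - H₁).PosSemidef)
    (hneg : negCount H₁ = negCount H₂)
    (ε : ℝ) (hε : 0 < ε)
    (hu1e : IsUnit (H₁ - (ε : ℂ) • 1)) (hu2e : IsUnit (H₂ - (ε : ℂ) • 1))
    (hin1 : negCount (H₁ - (ε : ℂ) • 1) = negCount H₁ ∧
            posCount (H₁ - (ε : ℂ) • 1) = posCount H₁)
    (hin2 : negCount (H₂ - (ε : ℂ) • 1) = negCount H₂ ∧
            posCount (H₂ - (ε : ℂ) • 1) = posCount H₂) :
    ((H₁ - (ε : ℂ) • 1)⁻¹ - (H₂ - (ε : ℂ) • 1)⁻¹).PosSemidef :=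
  shifted_antitonicity_general H₁ H₂ h1 h2 hle hneg ε hu1e hu2e hin1 hin2
end
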